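/- arXiv:1409.8350 — 2 statements merged into one kernel-verified Lean document; each statement's English description precedes it below -/
import Mathlib

section
/- Suppose the Gauss periods η_a, 0 ≤ a ≤ N−1, take exactly three distinct rational values α₁, α₂, α₃, and let I_i = {γ̄^a ∈ Z_N : η_a = α_i} for i = 1,2,3. Then in the group ring ℚ[Z_N] one has (α₁I₁ + α₂I₂ + α₃I₃)(α₁I₁^{(−1)} + α₂I₂^{(−1)} + α₃I₃^{(−1)}) = q·1 − ((q−1)/N)·Z_N, where each subset is identified with the sum of its elements and Z_N denotes the sum of all elements of the group. -/
/-!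
Write `η_a = ∑_{j < e} ψ(γ^{a+Nj})` with `e = (q-1)/N`. Since `∑_{x ∈ F} ψ(xc) = q·[c = 0]`
for the primitive character `ψ`, the autocorrelation of the periods is
`∑_a η_{a+b} \overline{η_a} = ∑_{t < e} ∑_{x ∈ F^×} ψ(x(γ^{b+Nt} - 1)) = q·[b = 0] - e`,
because `γ^{b+Nt} = 1` only for `b = t = 0`. The periods are rational, hence real, and
`A = α₁I₁ + α₂I₂ + α₃I₃` is `∑_x η_x x`, so the coefficient of `b` in `A A^{(-1)}` is exactly
this autocorrelation.
-/

open Finset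

theorem Finset.sum_range_mul_eq_sum_sum {M : Type*} [AddCommMonoid M] (N e : ℕ) (g : ℕ → M) :
    ∑ n ∈ range (N * e), g n = ∑ a ∈ range N, ∑ j ∈ range e, g (a + N * j) := by
  rw [mul_comm, ← Fin.sum_univ_eq_sum_range, ← finProdFinEquiv.sum_comp, Fintype.sum_prod_type,
    sum_comm, ← Fin.sum_univ_eq_sum_range]
  simp only [finProdFinEquiv_apply_val]
  exact sum_congr rfl fun a _ => Fin.sum_univ_eq_sum_range (fun j => g (a + N * j)) e

theorem ZMod.sum_val_eq_sum_range {M : Type*} [AddCommMonoid M] (N : ℕ) [NeZero N] (f : ℕ → M) :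
    ∑ x : ZMod N, f x.val = ∑ a ∈ range N, f a := by
  obtain ⟨n, rfl⟩ := Nat.exists_eq_succ_of_ne_zero (NeZero.ne N)
  exact Fin.sum_univ_eq_sum_range f _

theorem pow_add_mul_eq_one_iff {M : Type*} [Monoid M] {γ : M} {N e b t : ℕ}
    (hγ : orderOf γ = N * e) (hb : b < N) (ht : t < e) :
    γ ^ (b + N * t) = 1 ↔ b = 0 ∧ t = 0 := by
  rw [← orderOf_dvd_iff_pow_eq_one, hγ]
  refine ⟨fun h => ?_, by rintro ⟨rfl, rfl⟩; simp⟩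
  have h0 : b + N * t = 0 := Nat.eq_zero_of_dvd_of_lt h (by nlinarith)
  exact ⟨by omega, (Nat.mul_eq_zero.mp (by omega : N * t = 0)).resolve_left (by omega)⟩

theorem FiniteField.sum_range_pow_eq_sum_sub {F M : Type*} [Field F] [Fintype F] [AddCommGroup M]
    {γ : F} (hγ : orderOf γ = Fintype.card F - 1) (g : F → M) :
    ∑ n ∈ range (Fintype.card F - 1), g (γ ^ n) = ∑ x, g x - g 0 := by
  classical
  have hγ0 : γ ≠ 0 := by
    rintro rfl
    have := Fintype.one_lt_card (α := F)
    rw [orderOf_eq_zero_iff'.mpr (fun n hn h => by simp [zero_pow hn.ne'] at h)] at hγ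
    omega
  have hinj : Set.InjOn (γ ^ ·) (range (Fintype.card F - 1) : Set ℕ) := fun a ha b hb =>
    pow_injOn_Iio_orderOf (by simpa [hγ] using ha) (by simpa [hγ] using hb)
  have himage : (range (Fintype.card F - 1)).image (γ ^ ·) = univ.erase 0 := by
    refine eq_of_subset_of_card_le (fun x hx => ?_) ?_
    · obtain ⟨n, -, rfl⟩ := mem_image.mp hx
      simp [pow_ne_zero _ hγ0]
    · simp [card_image_of_injOn hinj]
  rw [← sum_image hinj, himage, ← sum_erase_add _ _ (mem_univ 0), add_sub_cancel_right]

namespace AddChar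

variable {F : Type*} [Field F] [Fintype F]

theorem isPrimitive_zmodChar_comp_trace {p : ℕ} [Fact p.Prime] [Algebra (ZMod p) F] {ζ : ℂ}
    (hζ : IsPrimitiveRoot ζ p) :
    IsPrimitive ((zmodChar p hζ.pow_eq_one).compAddMonoidHom
      (Algebra.trace (ZMod p) F).toAddMonoidHom) := by
  have : Module.Finite (ZMod p) F := Module.Finite.of_finite
  obtain ⟨x, hx⟩ := Algebra.trace_surjective (ZMod p) F 1
  refine IsPrimitive.of_ne_one (ne_one_iff.mpr ⟨x, ?_⟩)
  simp only [compAddMonoidHom_apply, LinearMap.toAddMonoidHom_coe, hx, zmodChar_apply,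
    ZMod.val_one, pow_one]
  exact hζ.ne_one (Fact.out : p.Prime).one_lt

theorem sum_range_pow_mul [DecidableEq F] {ψ : AddChar F ℂ} (hψ : ψ.IsPrimitive) {γ : F}
    (hγ : orderOf γ = Fintype.card F - 1) (c : F) :
    ∑ n ∈ range (Fintype.card F - 1), ψ (γ ^ n * c)
      = (if c = 0 then (Fintype.card F : ℂ) else 0) - 1 := by
  rw [FiniteField.sum_range_pow_eq_sum_sub hγ (fun x => ψ (x * c)), sum_mulShift c hψ]
  simp

end AddChar

section GaussPeriod

variable {F : Type*} [Field F] [Fintype F]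

/-- The Gauss period `η_a`: the sum of `ψ` over the coset `γ^a C₀`, where
`C₀ = {γ^{Nj} : j < (q-1)/N}` is the group of `N`-th powers when `γ` is primitive. -/
def gaussPeriod (ψ : AddChar F ℂ) (γ : F) (N a : ℕ) : ℂ :=
  ∑ j ∈ range ((Fintype.card F - 1) / N), ψ (γ ^ (a + N * j))

variable {ψ : AddChar F ℂ} {γ : F} {N : ℕ}

theorem gaussPeriod_periodic (hγ : orderOf γ = Fintype.card F - 1)
    (hN : N ∣ Fintype.card F - 1) : Function.Periodic (gaussPeriod ψ γ N) N := by
  intro a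
  have hγe : γ ^ (N * ((Fintype.card F - 1) / N)) = 1 := by
    rw [Nat.mul_div_cancel' hN, ← hγ, pow_orderOf_eq_one]
  unfold gaussPeriod
  generalize (Fintype.card F - 1) / N = e at hγe ⊢
  cases e with
  | zero => simp
  | succ k =>
    have hlast : γ ^ (a + N + N * k) = γ ^ (a + N * 0) := by
      rw [mul_zero, add_zero, add_assoc, add_comm N, ← mul_add_one, pow_add, hγe, mul_one]
    rw [sum_range_succ, sum_range_succ', hlast]
    exact congrArg (· + _) (sum_congr rfl fun j _ => by ring_nf)

theorem sum_gaussPeriod_add_mul_conj (hψ : ψ.IsPrimitive)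
    (hγ : orderOf γ = Fintype.card F - 1) (hN : N ∣ Fintype.card F - 1) {b : ℕ} (hb : b < N) :
    ∑ a ∈ range N, gaussPeriod ψ γ N (a + b) * (starRingEnd ℂ) (gaussPeriod ψ γ N a)
      = (if b = 0 then (Fintype.card F : ℂ) else 0) - ((Fintype.card F - 1) / N : ℕ) := by
  classical
  set e := (Fintype.card F - 1) / N
  have hNe : N * e = Fintype.card F - 1 := Nat.mul_div_cancel' hN
  have he : 0 < e := by
    have := Fintype.one_lt_card (α := F)
    exact Nat.div_pos (Nat.le_of_dvd (by omega) hN) (by omega)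
  have hshift (a j : ℕ) : gaussPeriod ψ γ N (a + N * j) = gaussPeriod ψ γ N a := by
    simpa [mul_comm] using (gaussPeriod_periodic hγ hN).nat_mul j a
  calc ∑ a ∈ range N, gaussPeriod ψ γ N (a + b) * (starRingEnd ℂ) (gaussPeriod ψ γ N a)
      = ∑ a ∈ range N, ∑ j ∈ range e,
          gaussPeriod ψ γ N (a + N * j + b) * ψ (-γ ^ (a + N * j)) := by
        refine sum_congr rfl fun a _ => ?_
        rw [gaussPeriod.eq_1 ψ γ N a, map_sum, mul_sum]
        refine sum_congr rfl fun j _ => ?_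
        rw [AddChar.map_neg_eq_conj, add_right_comm, hshift]
    _ = ∑ n ∈ range (Fintype.card F - 1), gaussPeriod ψ γ N (n + b) * ψ (-γ ^ n) := by
        rw [← hNe, sum_range_mul_eq_sum_sum]
    _ = ∑ t ∈ range e, ∑ n ∈ range (Fintype.card F - 1), ψ (γ ^ n * (γ ^ (b + N * t) - 1)) := by
        simp only [gaussPeriod, sum_mul]
        rw [sum_comm]
        refine sum_congr rfl fun t _ => sum_congr rfl fun n _ => ?_
        rw [← AddChar.map_add_eq_mul, add_assoc, pow_add, mul_sub, mul_one, sub_eq_add_neg]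
    _ = ∑ t ∈ range e, ((if b = 0 ∧ t = 0 then (Fintype.card F : ℂ) else 0) - 1) := by
        refine sum_congr rfl fun t ht => ?_
        simp only [AddChar.sum_range_pow_mul hψ hγ, sub_eq_zero,
          pow_add_mul_eq_one_iff (hγ.trans hNe.symm) hb (mem_range.mp ht)]
    _ = (if b = 0 then (Fintype.card F : ℂ) else 0) - e := by
        rw [sum_sub_distrib]
        by_cases hb0 : b = 0 <;> simp [hb0, he]

theorem sum_gaussPeriod_val_add_mul_conj [NeZero N] (hψ : ψ.IsPrimitive)
    (hγ : orderOf γ = Fintype.card F - 1) (hN : N ∣ Fintype.card F - 1) (b : ZMod N) :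
    ∑ x : ZMod N, gaussPeriod ψ γ N (x + b).val * (starRingEnd ℂ) (gaussPeriod ψ γ N x.val)
      = (if b = 0 then (Fintype.card F : ℂ) else 0) - ((Fintype.card F - 1) / N : ℕ) := by
  simp only [ZMod.val_add, (gaussPeriod_periodic hγ hN).map_mod_nat]
  rw [ZMod.sum_val_eq_sum_range N
      (fun a => gaussPeriod ψ γ N (a + b.val) * (starRingEnd ℂ) (gaussPeriod ψ γ N a)),
    sum_gaussPeriod_add_mul_conj hψ hγ hN (ZMod.val_lt b)]
  simp only [ZMod.val_eq_zero]

theorem sum_add_mul_of_ratCast_eq_gaussPeriod [NeZero N] (hψ : ψ.IsPrimitive)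
    (hγ : orderOf γ = Fintype.card F - 1) (hN : N ∣ Fintype.card F - 1) {c : ZMod N → ℚ}
    (hc : ∀ x, (c x : ℂ) = gaussPeriod ψ γ N x.val) (b : ZMod N) :
    ∑ y, c (y + b) * c y
      = (if b = 0 then (Fintype.card F : ℚ) else 0) - ((Fintype.card F - 1) / N : ℕ) := by
  have h := sum_gaussPeriod_val_add_mul_conj hψ hγ hN b
  simp only [← hc, map_ratCast] at h
  rw [← Rat.cast_inj (α := ℂ)]
  push_cast [apply_ite (Rat.cast (K := ℂ))]
  exact h

end GaussPeriod

namespace AddMonoidAlgebra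

variable {G R : Type*}

theorem sum_smul_sum_filter_single [Semiring R] [DecidableEq R] {ι : Type*} [Fintype ι]
    (c : ι → R) {t : Finset R} (hc : ∀ i, c i ∈ t) (f : ι → G) :
    ∑ r ∈ t, r • ∑ i ∈ univ.filter (c · = r), single (f i) (1 : R) = ∑ i, single (f i) (c i) := by
  rw [← sum_fiberwise_of_maps_to (fun i _ => hc i)]
  refine sum_congr rfl fun r _ => ?_
  rw [smul_sum]
  refine sum_congr rfl fun i hi => ?_
  rw [smul_single', mul_one, (mem_filter.mp hi).2]

theorem smul_sum_single_add_add_eq_sum_single [Semiring R] {ι : Type*} [Fintype ι]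
    {c : ι → R} {α₁ α₂ α₃ : R} (h12 : α₁ ≠ α₂) (h13 : α₁ ≠ α₃) (h23 : α₂ ≠ α₃)
    (hc : ∀ i, c i = α₁ ∨ c i = α₂ ∨ c i = α₃) {I₁ I₂ I₃ : Finset ι}
    (hI₁ : ∀ i, i ∈ I₁ ↔ c i = α₁) (hI₂ : ∀ i, i ∈ I₂ ↔ c i = α₂)
    (hI₃ : ∀ i, i ∈ I₃ ↔ c i = α₃) (f : ι → G) :
    α₁ • ∑ i ∈ I₁, single (f i) (1 : R) + α₂ • ∑ i ∈ I₂, single (f i) (1 : R)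
      + α₃ • ∑ i ∈ I₃, single (f i) (1 : R) = ∑ i, single (f i) (c i) := by
  classical
  have hfilter {I : Finset ι} {α : R} (hI : ∀ i, i ∈ I ↔ c i = α) :
      I = univ.filter (c · = α) := by
    ext i
    simp [hI]
  rw [← sum_smul_sum_filter_single c (t := {α₁, α₂, α₃}) (by simpa using hc) f,
    sum_insert (by simp [h12, h13]), sum_insert (by simp [h23]), sum_singleton,
    ← hfilter hI₁, ← hfilter hI₂, ← hfilter hI₃, add_assoc]

variable [AddCommGroup G] [Fintype G]

theorem sum_single_mul_sum_single_neg [CommSemiring R] (c : G → R) :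
    (∑ x, single x (c x)) * (∑ y, single (-y) (c y)) = ∑ b, single b (∑ y, c (y + b) * c y) := by
  calc (∑ x, single x (c x)) * (∑ y, single (-y) (c y))
      = ∑ y, ∑ x, single (x - y) (c x * c y) := by
        rw [sum_mul_sum, sum_comm]
        simp only [single_mul_single, sub_eq_add_neg]
    _ = ∑ y, ∑ b, single b (c (y + b) * c y) :=
        sum_congr rfl fun y _ => Fintype.sum_equiv (Equiv.subRight y) _ _ fun x => by simp
    _ = ∑ b, single b (∑ y, c (y + b) * c y) := by
        rw [sum_comm]
        exact sum_congr rfl fun b _ => (map_sum (singleAddHom b) _ _).symm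

theorem sum_single_ite_sub [Ring R] [DecidableEq G] (a s : R) :
    ∑ b : G, single b ((if b = 0 then a else 0) - s) = a • 1 - s • ∑ b : G, single b 1 := by
  simp [sum_sub_distrib, single_sub, smul_sum, one_def, apply_ite (single _)]

end AddMonoidAlgebra

open AddMonoidAlgebra

theorem stmt_0_general
    (p N q : ℕ) [Fact p.Prime]
    [NeZero N] (hNq : N ∣ q - 1)
    (F : Type) [Field F] [Fintype F] [Algebra (ZMod p) F]
    (hcard : Fintype.card F = q)
    -- γ is a primitive element of F
    (γ : F) (hγ : orderOf γ = q - 1)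
    -- canonical additive character ψ(x) = ζ_p^{Tr_{q/p}(x)}
    (ζ : ℂ) (hζ : IsPrimitiveRoot ζ p)
    (ψ : F → ℂ) (hψ : ∀ x, ψ x = ζ ^ (Algebra.trace (ZMod p) F x).val)
    -- Gauss periods η_a = ψ(γ^a C₀), where C₀ = ⟨γ^N⟩ has (q-1)/N elements
    (η : ℕ → ℂ)
    (hη : ∀ a, η a = ∑ j ∈ Finset.range ((q - 1) / N), ψ (γ ^ (a + N * j)))
    -- the Gauss periods take exactly the three distinct rational values α₁, α₂, α₃
    (α₁ α₂ α₃ : ℚ)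
    (h12 : α₁ ≠ α₂) (h13 : α₁ ≠ α₃) (h23 : α₂ ≠ α₃)
    (hval : {c : ℂ | ∃ a, a < N ∧ η a = c} = {(α₁ : ℂ), (α₂ : ℂ), (α₃ : ℂ)})
    -- index sets I_i ⊆ Z_N
    (I₁ I₂ I₃ : Finset (ZMod N))
    (hI₁ : ∀ x : ZMod N, x ∈ I₁ ↔ η x.val = (α₁ : ℂ))
    (hI₂ : ∀ x : ZMod N, x ∈ I₂ ↔ η x.val = (α₂ : ℂ))
    (hI₃ : ∀ x : ZMod N, x ∈ I₃ ↔ η x.val = (α₃ : ℂ)) :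
    (α₁ • (∑ a ∈ I₁, AddMonoidAlgebra.single a (1 : ℚ))
      + α₂ • (∑ a ∈ I₂, AddMonoidAlgebra.single a (1 : ℚ))
      + α₃ • (∑ a ∈ I₃, AddMonoidAlgebra.single a (1 : ℚ)))
    * (α₁ • (∑ a ∈ I₁, AddMonoidAlgebra.single (-a) (1 : ℚ))
      + α₂ • (∑ a ∈ I₂, AddMonoidAlgebra.single (-a) (1 : ℚ))
      + α₃ • (∑ a ∈ I₃, AddMonoidAlgebra.single (-a) (1 : ℚ)))
    = (q : ℚ) • (1 : AddMonoidAlgebra ℚ (ZMod N))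
      - (((q : ℚ) - 1) / N) • ∑ g : ZMod N, AddMonoidAlgebra.single g (1 : ℚ) := by
  classical
  subst hcard
  set Ψ := (AddChar.zmodChar p hζ.pow_eq_one).compAddMonoidHom
    (Algebra.trace (ZMod p) F).toAddMonoidHom
  have hΨ : Ψ.IsPrimitive := AddChar.isPrimitive_zmodChar_comp_trace hζ
  have hηΨ (a : ℕ) : η a = gaussPeriod Ψ γ N a := by
    rw [hη, gaussPeriod]
    exact sum_congr rfl fun j _ => hψ _
  have hvals (x : ZMod N) : ∃ r : ℚ, (r = α₁ ∨ r = α₂ ∨ r = α₃) ∧ η x.val = r := by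
    have hx : η x.val ∈ {c : ℂ | ∃ a, a < N ∧ η a = c} := ⟨x.val, x.val_lt, rfl⟩
    rw [hval] at hx
    rcases hx with hx | hx | hx
    exacts [⟨α₁, by simp, hx⟩, ⟨α₂, by simp, hx⟩, ⟨α₃, by simp, hx⟩]
  choose c hct hc using hvals
  have hmem (α : ℚ) (I : Finset (ZMod N)) (hI : ∀ x, x ∈ I ↔ η x.val = α) (x : ZMod N) :
      x ∈ I ↔ c x = α := by
    rw [hI, hc, Rat.cast_inj]
  have hcombo := smul_sum_single_add_add_eq_sum_single (G := ZMod N) h12 h13 h23 hct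
    (hmem _ _ hI₁) (hmem _ _ hI₂) (hmem _ _ hI₃)
  have hcorr := sum_add_mul_of_ratCast_eq_gaussPeriod hΨ hγ hNq fun x => by rw [← hc, hηΨ]
  have hcoef : ((Fintype.card F : ℚ) - 1) / N = ((Fintype.card F - 1) / N : ℕ) := by
    rw [Nat.cast_div hNq (by exact_mod_cast NeZero.ne N), Nat.cast_sub Fintype.card_pos]
    simp
  rw [hcombo fun a => a, hcombo fun a => -a, sum_single_mul_sum_single_neg,
    sum_congr rfl fun b _ => by rw [hcorr b], sum_single_ite_sub, hcoef]

/-- Lemma 2.2 / `lem_gr`.  If the Gauss periods of order `N` of `F_q`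
take exactly three distinct rational values `α₁, α₂, α₃`, then in the group ring
`ℚ[Z_N]` one has
`(α₁I₁+α₂I₂+α₃I₃)(α₁I₁⁽⁻¹⁾+α₂I₂⁽⁻¹⁾+α₃I₃⁽⁻¹⁾) = q·1 - ((q-1)/N)·Z_N`. -/
theorem stmt_0
    (p f N q : ℕ) [Fact p.Prime] (hf : 0 < f) (hq : q = p ^ f)
    (hN : 2 < N) [NeZero N] (hNq : N ∣ q - 1)
    (F : Type) [Field F] [Fintype F] [Algebra (ZMod p) F]
    (hcard : Fintype.card F = q)
    -- γ is a primitive element of F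
    (γ : F) (hγ : orderOf γ = q - 1)
    -- canonical additive character ψ(x) = ζ_p^{Tr_{q/p}(x)}
    (ζ : ℂ) (hζ : IsPrimitiveRoot ζ p)
    (ψ : F → ℂ) (hψ : ∀ x, ψ x = ζ ^ (Algebra.trace (ZMod p) F x).val)
    -- Gauss periods η_a = ψ(γ^a C₀), where C₀ = ⟨γ^N⟩ has (q-1)/N elements
    (η : ℕ → ℂ)
    (hη : ∀ a, η a = ∑ j ∈ Finset.range ((q - 1) / N), ψ (γ ^ (a + N * j)))
    -- the Gauss periods take exactly the three distinct rational values α₁, α₂, α₃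
    (α₁ α₂ α₃ : ℚ)
    (h12 : α₁ ≠ α₂) (h13 : α₁ ≠ α₃) (h23 : α₂ ≠ α₃)
    (hval : {c : ℂ | ∃ a, a < N ∧ η a = c} = {(α₁ : ℂ), (α₂ : ℂ), (α₃ : ℂ)})
    -- index sets I_i ⊆ Z_N
    (I₁ I₂ I₃ : Finset (ZMod N))
    (hI₁ : ∀ x : ZMod N, x ∈ I₁ ↔ η x.val = (α₁ : ℂ))
    (hI₂ : ∀ x : ZMod N, x ∈ I₂ ↔ η x.val = (α₂ : ℂ))
    (hI₃ : ∀ x : ZMod N, x ∈ I₃ ↔ η x.val = (α₃ : ℂ)) :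
    (α₁ • (∑ a ∈ I₁, AddMonoidAlgebra.single a (1 : ℚ))
      + α₂ • (∑ a ∈ I₂, AddMonoidAlgebra.single a (1 : ℚ))
      + α₃ • (∑ a ∈ I₃, AddMonoidAlgebra.single a (1 : ℚ)))
    * (α₁ • (∑ a ∈ I₁, AddMonoidAlgebra.single (-a) (1 : ℚ))
      + α₂ • (∑ a ∈ I₂, AddMonoidAlgebra.single (-a) (1 : ℚ))
      + α₃ • (∑ a ∈ I₃, AddMonoidAlgebra.single (-a) (1 : ℚ)))
    = (q : ℚ) • (1 : AddMonoidAlgebra ℚ (ZMod N))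
      - (((q : ℚ) - 1) / N) • ∑ g : ZMod N, AddMonoidAlgebra.single g (1 : ℚ) :=
  stmt_0_general p N q hNq F hcard γ hγ ζ hζ ψ hψ η hη α₁ α₂ α₃ h12 h13 h23 hval I₁ I₂ I₃ hI₁ hI₂
    hI₃
end

section
/- Suppose the Gauss periods η_a, 0 ≤ a ≤ N−1, take exactly ℓ distinct values α₁, …, α_ℓ, and let I_i = {a ∈ ℤ_N : η_a = α_i}. Then each I_i is invariant under multiplication by p on ℤ_N (if a ∈ I_i then pa mod N ∈ I_i). Moreover, if m := gcd{ord_n(p) : n > 1, n ∣ N} ≥ 2, then there exists a unique index i₀ with |I_{i₀}| ≡ 1 (mod m), and |I_i| ≡ 0 (mod m) for all i ≠ i₀. -/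
/-!
The Frobenius `x ↦ x ^ p` preserves the trace, hence `ψ`, and maps the coset `γ^a C₀` onto
`γ^(pa) C₀`; so `η_(pa) = η_a`, and `η_a` only depends on `a mod N`. Each `I_i` is therefore a
union of orbits of `⟨p⟩ ≤ (ℤ/N)ˣ` acting on `ℤ/N`. For `x ≠ 0` of additive order `n` (a divisor
`n > 1` of `N`), `p^t x = x` forces `p^t ≡ 1 (mod n)`, so the orbit of `x` has length divisible by
`ord_n(p)`, hence by `m`. Only the fixed point `0` is left over, and it lies in exactly one `I_i`.
-/

open Finset Function MulAction Subgroup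

lemma Algebra.trace_pow_char (p : ℕ) [Fact p.Prime] {F : Type*} [Field F] [Finite F]
    [Algebra (ZMod p) F] (x : F) :
    Algebra.trace (ZMod p) F (x ^ p) = Algebra.trace (ZMod p) F x := by
  have := Algebra.trace_eq_of_algEquiv (FiniteField.frobeniusAlgEquivOfAlgebraic (ZMod p) F) x
  rwa [FiniteField.coe_frobeniusAlgEquivOfAlgebraic, ZMod.card] at this

lemma Function.Periodic.map_val_natCast {β : Type*} {G : ℕ → β} {k : ℕ} (hG : Periodic G k)
    (n : ℕ) : G (n : ZMod k).val = G n := by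
  rw [ZMod.val_natCast, hG.map_mod_nat]

section Periodic

variable {β : Type*} [AddCommMonoid β]

lemma Finset.sum_range_eq_sum_zmod (k : ℕ) [NeZero k] (G : ℕ → β) :
    ∑ j ∈ range k, G j = ∑ x : ZMod k, G x.val := by
  obtain ⟨n, rfl⟩ : ∃ n, k = n + 1 := Nat.exists_eq_succ_of_ne_zero (NeZero.ne k)
  -- `ZMod (n + 1)` is `Fin (n + 1)` by definition, and `ZMod.val` is `Fin.val` there.
  exact (Fin.sum_univ_eq_sum_range G (n + 1)).symm

lemma Function.Periodic.sum_range_comp {G : ℕ → β} {k : ℕ} [NeZero k] (hG : Periodic G k)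
    (e : ZMod k ≃ ZMod k) (h : ℕ → ℕ) (he : ∀ n, (h n : ZMod k) = e n) :
    ∑ j ∈ range k, G (h j) = ∑ j ∈ range k, G j := by
  simp only [sum_range_eq_sum_zmod k, ← hG.map_val_natCast (h _), he, ZMod.natCast_zmod_val]
  exact e.sum_comp fun x => G x.val

end Periodic

section PowerSums

variable {M β : Type*} [Monoid M] {γ : M} {N k : ℕ}

lemma periodic_pow_add_mul (hγ : orderOf γ = N * k) (g : M → β) (a : ℕ) :
    Periodic (fun j => g (γ ^ (a + N * j))) k := fun j => by
  simp only [mul_add, ← add_assoc, ← hγ, pow_add, pow_orderOf_eq_one, mul_one]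

variable [AddCommMonoid β] [NeZero k]

lemma periodic_sum_pow_add_mul (hγ : orderOf γ = N * k) (g : M → β) :
    Periodic (fun a => ∑ j ∈ range k, g (γ ^ (a + N * j))) N := fun a => by
  have := (periodic_pow_add_mul hγ g a).sum_range_comp (Equiv.addRight 1) (· + 1)
    (fun n => by push_cast; rfl)
  refine Eq.trans (sum_congr rfl fun j _ => ?_) this
  rw [mul_add, mul_one, ← add_assoc, add_right_comm a]

lemma sum_pow_mul_add_mul_eq_of_map_pow {p : ℕ} (hp : p.Coprime k) (hγ : orderOf γ = N * k)
    {g : M → β} (hg : ∀ x, g (x ^ p) = g x) (a : ℕ) :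
    ∑ j ∈ range k, g (γ ^ (p * a + N * j)) = ∑ j ∈ range k, g (γ ^ (a + N * j)) := by
  have := (periodic_pow_add_mul hγ g (p * a)).sum_range_comp (ZMod.unitOfCoprime p hp).mulLeft
    (p * ·) (fun n => by simp)
  rw [← this]
  refine sum_congr rfl fun j _ => ?_
  rw [← hg (γ ^ (a + N * j)), ← pow_mul]
  congr 2
  ring

end PowerSums

lemma MulAction.dvd_card_of_dvd_card_orbit {G X : Type*} [Group G] [MulAction G X] {m : ℕ}
    {S : Finset X} (hS : ∀ g : G, ∀ x ∈ S, g • x ∈ S)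
    (hm : ∀ x ∈ S, m ∣ Nat.card (orbit G x)) : m ∣ #S := by
  classical
  set π := Quotient.mk (orbitRel G X)
  rw [card_eq_sum_card_image π S]
  refine dvd_sum fun ω hω => ?_
  obtain ⟨y, hy, rfl⟩ := mem_image.mp hω
  have hfiber : (↑{x ∈ S | π x = π y} : Set X) = orbit G y := by
    ext x
    simp only [π, coe_filter, Set.mem_ofPred_eq, Quotient.eq, orbitRel_apply]
    refine ⟨And.right, fun hx => ⟨?_, hx⟩⟩
    obtain ⟨g, rfl⟩ := hx
    exact hS g y hy
  rw [← Set.ncard_coe_finset, hfiber, ← Nat.card_coe_set_eq]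
  exact hm y hy

lemma natCast_eq_one_of_nsmul_eq_self {A : Type*} [AddGroup A] {x : A} {c : ℕ} (h : c • x = x) :
    (c : ZMod (addOrderOf x)) = 1 := by
  have : ((c : ℤ) - 1) • x = 0 := by
    rw [sub_eq_add_neg, add_zsmul, natCast_zsmul, h, neg_zsmul, one_zsmul, add_neg_cancel]
  rw [← sub_eq_zero]
  exact_mod_cast (ZMod.intCast_zmod_eq_zero_iff_dvd _ _).mpr
    (addOrderOf_dvd_iff_zsmul_eq_zero.mpr this)

lemma orderOf_dvd_minimalPeriod_smul {R : Type*} [Ring R] {u : Rˣ} {p : ℕ} (hu : (u : R) = p)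
    (x : R) : orderOf (p : ZMod (addOrderOf x)) ∣ minimalPeriod (u • ·) x := by
  apply orderOf_dvd_of_pow_eq_one
  have h : u ^ minimalPeriod (u • ·) x • x = x := by
    simpa only [smul_iterate] using iterate_minimalPeriod (f := (u • ·)) (x := x)
  rw [Units.smul_def, smul_eq_mul, Units.val_pow_eq_pow_val, hu, ← Nat.cast_pow,
    ← nsmul_eq_mul] at h
  exact_mod_cast natCast_eq_one_of_nsmul_eq_self h

lemma ZMod.dvd_card_erase_zero_of_mul_mem {N p m : ℕ} [NeZero N] (hp : p.Coprime N)
    (hm : ∀ n, 1 < n → n ∣ N → m ∣ orderOf (p : ZMod n)) {S : Finset (ZMod N)}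
    (hS : ∀ x ∈ S, (p : ZMod N) * x ∈ S) : m ∣ #(S.erase 0) := by
  set u := ZMod.unitOfCoprime p hp
  have hu : (u : ZMod N) = p := ZMod.coe_unitOfCoprime p hp
  have hpow (n : ℕ) (x : ZMod N) (hx : x ∈ S) : u ^ n • x ∈ S := by
    induction n with
    | zero => simpa using hx
    | succ n ih =>
      rw [pow_succ', mul_smul, Units.smul_def, hu]
      exact hS _ ih
  refine dvd_card_of_dvd_card_orbit (G := zpowers u) ?_ fun x hx => ?_
  · rintro ⟨g, hg⟩ x hx
    obtain ⟨n, rfl⟩ := mem_powers_iff_mem_zpowers.mpr hg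
    rw [mem_erase] at hx ⊢
    exact ⟨(smul_ne_zero_iff_ne _).mpr hx.1, hpow n x hx.2⟩
  · have hx0 : x ≠ 0 := ne_of_mem_erase hx
    have hxN : addOrderOf x ∣ N := by simpa only [ZMod.card] using addOrderOf_dvd_card (x := x)
    have hx1 : 1 < addOrderOf x := by
      have hne : addOrderOf x ≠ 1 := AddMonoid.addOrderOf_eq_one_iff.not.mpr hx0
      have hpos : 0 < addOrderOf x := Nat.pos_of_dvd_of_pos hxN (NeZero.pos N)
      omega
    have := Fintype.ofFinite (orbit (zpowers u) x)
    rw [Nat.card_eq_fintype_card, ← minimalPeriod_eq_card]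
    exact (hm _ hx1 hxN).trans (orderOf_dvd_minimalPeriod_smul hu x)

lemma Nat.existsUnique_modEq_one {ι : Type*} {m : ℕ} (hm : 2 ≤ m) {c : ι → ℕ} {i₀ : ι}
    (h₀ : c i₀ ≡ 1 [MOD m]) (h : ∀ i ≠ i₀, c i ≡ 0 [MOD m]) :
    ∃! i, c i ≡ 1 [MOD m] ∧ ∀ j ≠ i, c j ≡ 0 [MOD m] := by
  refine ⟨i₀, ⟨h₀, h⟩, fun i ⟨_, hi⟩ => by_contra fun hne => ?_⟩
  have : m ∣ 1 := Nat.modEq_zero_iff_dvd.mp (h₀.symm.trans (hi i₀ (Ne.symm hne)))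
  exact absurd (Nat.le_of_dvd one_pos this) (by omega)

theorem stmt_8_general
    (p f N q : ℕ) [Fact p.Prime] (hf : 0 < f) (hq : q = p ^ f)
    [NeZero N] (hNq : N ∣ q - 1)
    (F : Type) [Field F] [Fintype F] [Algebra (ZMod p) F]
    (γ : F) (hγ : orderOf γ = q - 1)
    (ζ : ℂ)
    (ψ : F → ℂ) (hψ : ∀ x, ψ x = ζ ^ (Algebra.trace (ZMod p) F x).val)
    (η : ℕ → ℂ)
    (hη : ∀ a, η a = ∑ j ∈ Finset.range ((q - 1) / N), ψ (γ ^ (a + N * j)))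
    -- the Gauss periods take exactly ℓ distinct values α 0, …, α (ℓ-1)
    (ℓ : ℕ) (α : Fin ℓ → ℂ) (hαinj : Function.Injective α)
    (hval : {c : ℂ | ∃ a, a < N ∧ η a = c} = Set.range α)
    (I : Fin ℓ → Finset (ZMod N))
    (hI : ∀ i : Fin ℓ, ∀ x : ZMod N, x ∈ I i ↔ η x.val = α i)
    -- m = gcd of the multiplicative orders of p modulo the divisors n > 1 of N
    (m : ℕ)
    (hm : m = Finset.gcd ((Finset.range (N + 1)).filter fun n => 1 < n ∧ n ∣ N)
        fun n => orderOf ((p : ZMod n))) :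
    (∀ i : Fin ℓ, ∀ x : ZMod N, x ∈ I i → (p : ZMod N) * x ∈ I i)
    ∧ (2 ≤ m → ∃! i₀ : Fin ℓ, ((I i₀).card ≡ 1 [MOD m]
        ∧ ∀ i : Fin ℓ, i ≠ i₀ → (I i).card ≡ 0 [MOD m])) := by
  obtain ⟨k, hk⟩ := hNq
  have hp : p.Coprime (q - 1) := by
    have hq1 : 1 ≤ q := hq ▸ Nat.one_le_pow _ _ (Fact.out : p.Prime).pos
    refine (((Nat.coprime_self_sub_right hq1).mpr (Nat.coprime_one_right q))).coprime_dvd_left ?_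
    exact hq ▸ dvd_pow_self p hf.ne'
  have : NeZero k := ⟨by
    rintro rfl
    rw [hk, mul_zero, Nat.coprime_zero_right] at hp
    exact (Fact.out : p.Prime).one_lt.ne' hp⟩
  have hηk (a : ℕ) : η a = ∑ j ∈ range k, ψ (γ ^ (a + N * j)) := by
    rw [hη, hk, Nat.mul_div_cancel_left _ (NeZero.pos N)]
  have hγk : orderOf γ = N * k := hγ.trans hk
  have hper : Periodic η N := funext hηk ▸ periodic_sum_pow_add_mul hγk ψ
  have hpη (a : ℕ) : η (p * a) = η a := by
    simp only [hηk]
    refine sum_pow_mul_add_mul_eq_of_map_pow (hp.coprime_dvd_right (Dvd.intro_left N hk.symm)) hγk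
      (fun x => ?_) a
    rw [hψ, hψ, Algebra.trace_pow_char]
  have hIp (i : Fin ℓ) (x : ZMod N) (hx : x ∈ I i) : (p : ZMod N) * x ∈ I i := by
    rw [hI] at hx ⊢
    rwa [← ZMod.natCast_zmod_val x, ← Nat.cast_mul, hper.map_val_natCast, hpη]
  refine ⟨hIp, fun hm2 => ?_⟩
  have hmN (n : ℕ) (hn : 1 < n) (hnN : n ∣ N) : m ∣ orderOf (p : ZMod n) :=
    hm ▸ Finset.gcd_dvd (by simp [hn, hnN, Nat.lt_succ_of_le (Nat.le_of_dvd (NeZero.pos N) hnN)])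
  have hdvd (i : Fin ℓ) : #((I i).erase 0) ≡ 0 [MOD m] := Nat.modEq_zero_iff_dvd.mpr <|
    ZMod.dvd_card_erase_zero_of_mul_mem (hp.coprime_dvd_right (Dvd.intro k hk.symm)) hmN (hIp i)
  obtain ⟨i₀, hi₀⟩ : η 0 ∈ Set.range α := hval ▸ ⟨0, NeZero.pos N, rfl⟩
  have hzero (i : Fin ℓ) : 0 ∈ I i ↔ i = i₀ := by
    rw [hI, ZMod.val_zero, ← hi₀, hαinj.eq_iff, eq_comm]
  refine Nat.existsUnique_modEq_one hm2 (i₀ := i₀) ?_ fun i hi => ?_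
  · rw [← card_erase_add_one ((hzero i₀).mpr rfl)]
    exact (hdvd i₀).add_right 1
  · rw [← erase_eq_of_notMem (mt (hzero i).mp hi)]
    exact hdvd i

/-- Lemma 3.3 / `le:size`.  If the Gauss periods of order `N` of `F_q`
take exactly `ℓ` distinct values `α₁, …, α_ℓ`, then each index set `I_i` is invariant
under multiplication by `p` on `ℤ_N`; moreover, if
`m = gcd{ord_n(p) : n > 1, n ∣ N} ≥ 2`, there is a unique `i₀` with
`|I_{i₀}| ≡ 1 (mod m)` and `|I_i| ≡ 0 (mod m)` for all `i ≠ i₀`. -/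
theorem stmt_8
    (p f N q : ℕ) [Fact p.Prime] (hf : 0 < f) (hq : q = p ^ f)
    (hN : 1 < N) [NeZero N] (hNq : N ∣ q - 1)
    (F : Type) [Field F] [Fintype F] [Algebra (ZMod p) F]
    (hcard : Fintype.card F = q)
    (γ : F) (hγ : orderOf γ = q - 1)
    (ζ : ℂ) (hζ : IsPrimitiveRoot ζ p)
    (ψ : F → ℂ) (hψ : ∀ x, ψ x = ζ ^ (Algebra.trace (ZMod p) F x).val)
    (η : ℕ → ℂ)
    (hη : ∀ a, η a = ∑ j ∈ Finset.range ((q - 1) / N), ψ (γ ^ (a + N * j)))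
    -- the Gauss periods take exactly ℓ distinct values α 0, …, α (ℓ-1)
    (ℓ : ℕ) (α : Fin ℓ → ℂ) (hαinj : Function.Injective α)
    (hval : {c : ℂ | ∃ a, a < N ∧ η a = c} = Set.range α)
    (I : Fin ℓ → Finset (ZMod N))
    (hI : ∀ i : Fin ℓ, ∀ x : ZMod N, x ∈ I i ↔ η x.val = α i)
    -- m = gcd of the multiplicative orders of p modulo the divisors n > 1 of N
    (m : ℕ)
    (hm : m = Finset.gcd ((Finset.range (N + 1)).filter fun n => 1 < n ∧ n ∣ N)
        fun n => orderOf ((p : ZMod n))) :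
    (∀ i : Fin ℓ, ∀ x : ZMod N, x ∈ I i → (p : ZMod N) * x ∈ I i)
    ∧ (2 ≤ m → ∃! i₀ : Fin ℓ, ((I i₀).card ≡ 1 [MOD m]
        ∧ ∀ i : Fin ℓ, i ≠ i₀ → (I i).card ≡ 0 [MOD m])) :=
  stmt_8_general p f N q hf hq hNq F γ hγ ζ ψ hψ η hη ℓ α hαinj hval I hI m hm
end
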